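/- Let 𝒯 = (T, σ, 1) be an RTAM system at temperature 1 with 0 ∈ dom σ, and let c ∈ ℕ be the least radius with dom σ ⊆ B_c(0). If some producible assembly of 𝒯 contains a tile at a position outside the box B_{4|T|+c+1}(0), then 𝒯 has producible assemblies of arbitrarily large finite size (equivalently, an infinite producible assembly). (This is the pumping argument: any sufficiently long path from the seed can be stretched so that two tiles of the same type and orientation occur on it, and the segment between them can be repeated indefinitely.) -/

import Mathlib

/-! # Reflexive Tile Assembly Model (RTAM) -/

/-- A glue: `none` is the null glue; `some (l, s)` has label `l : ℤ` and strength `s : ℕ`.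
The complement of the label `l` is `-l`. -/
abbrev Glue : Type := Option (ℤ × ℕ)

/-- Strength with which two abutting glues bind: `s` if the labels are complementary and
the strengths are both equal to `s`, and `0` otherwise. -/
def glueBind : Glue → Glue → ℕ
  | some (l₁, s₁), some (l₂, s₂) => if l₂ = -l₁ ∧ s₂ = s₁ then s₁ else 0
  | _, _ => 0

/-- Two abutting glues match (for mismatch-freeness): both null, or complementary labels
with equal strengths. -/
def GlueMatch (g h : Glue) : Prop :=
  (g = none ∧ h = none) ∨ ∃ l s, g = some (l, s) ∧ h = some (-l, s)

/-- A tile type: glues on the north, east, south and west sides (in that order). -/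
abbrev TileType : Type := Glue × Glue × Glue × Glue

def TileType.north (t : TileType) : Glue := t.1
def TileType.east (t : TileType) : Glue := t.2.1
def TileType.south (t : TileType) : Glue := t.2.2.1
def TileType.west (t : TileType) : Glue := t.2.2.2

/-- A reflection `(h, v)`: `h` indicates a flip across the vertical axis (swapping east and
west and negating `x`), `v` a flip across the horizontal axis (swapping north and south and
negating `y`).  `D = (false, false)`, `H = (true, false)`, `V = (false, true)`,
`B = (true, true)`. -/
abbrev Reflection : Type := Bool × Bool

/-- Composition of reflections (the Klein four-group). -/
def Reflection.comp (r s : Reflection) : Reflection := (xor r.1 s.1, xor r.2 s.2)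

/-- The action of a reflection on a point of `ℤ²`. -/
def Reflection.onPoint (r : Reflection) (p : ℤ × ℤ) : ℤ × ℤ :=
  (if r.1 then -p.1 else p.1, if r.2 then -p.2 else p.2)

/-- The tile type obtained by reflecting `t` according to `r` (glues are unchanged, sides
are permuted). -/
def TileType.reflect (t : TileType) (r : Reflection) : TileType :=
  (if r.2 then TileType.south t else TileType.north t,
   if r.1 then TileType.west t else TileType.east t,
   if r.2 then TileType.north t else TileType.south t,
   if r.1 then TileType.east t else TileType.west t)

/-- A placed tile: a tile type together with its reflection. -/
abbrev Placement : Type := TileType × Reflection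

/-- An assembly: a partial function from `ℤ²` to placed tiles. -/
abbrev Assembly : Type := ℤ × ℤ → Option Placement

/-- The domain of an assembly. -/
def adom (α : Assembly) : Set (ℤ × ℤ) := {p | α p ≠ none}

/-- The glue presented by the placed tile `pl` at position `p` on the side facing
position `q` (the null glue if `q` is not adjacent to `p`). -/
def facingGlue (pl : Placement) (p q : ℤ × ℤ) : Glue :=
  if q = (p.1 + 1, p.2) then TileType.east (TileType.reflect pl.1 pl.2)
  else if q = (p.1 - 1, p.2) then TileType.west (TileType.reflect pl.1 pl.2)
  else if q = (p.1, p.2 + 1) then TileType.north (TileType.reflect pl.1 pl.2)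
  else if q = (p.1, p.2 - 1) then TileType.south (TileType.reflect pl.1 pl.2)
  else none

/-- The strength of the bond between the tiles of `α` at positions `p` and `q`. -/
def bondStrength (α : Assembly) (p q : ℤ × ℤ) : ℕ :=
  match α p, α q with
  | some a, some b => glueBind (facingGlue a p q) (facingGlue b q p)
  | _, _ => 0

/-- Adjacency in the binding graph of `α`. -/
def BondAdj (α : Assembly) (p q : ℤ × ℤ) : Prop := 0 < bondStrength α p q

/-- `α` is `τ`-stable: every cut of its binding graph has total strength at least `τ`
(i.e. some finite set of crossing edges already has total strength at least `τ`). -/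
def Stable (α : Assembly) (τ : ℕ) : Prop :=
  ∀ A : Set (ℤ × ℤ), A ⊆ adom α → A.Nonempty → (adom α \ A).Nonempty →
    ∃ E : Finset ((ℤ × ℤ) × (ℤ × ℤ)),
      (∀ e ∈ E, e.1 ∈ A ∧ e.2 ∈ adom α \ A) ∧
      τ ≤ ∑ e ∈ E, bondStrength α e.1 e.2

/-- An RTAM tile assembly system: a finite tile set, a finite stable seed assembly, and a
temperature. -/
structure RTAS where
  tiles : Finset TileType
  seed : Assembly
  temp : ℕ
  seed_nonempty : (adom seed).Nonempty
  seed_finite : (adom seed).Finite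
  seed_tiles : ∀ p pl, seed p = some pl → pl.1 ∈ tiles
  seed_stable : Stable seed temp

/-- `β` is obtained from `α` by `τ`-stably attaching a single tile (in any reflection) at
an empty position. -/
def Attaches (S : RTAS) (α β : Assembly) : Prop :=
  ∃ (p : ℤ × ℤ) (t : TileType) (r : Reflection),
    α p = none ∧ t ∈ S.tiles ∧ β = Function.update α p (some (t, r)) ∧ Stable β S.temp

/-- Producible assemblies: those reachable from the seed in finitely many attachment steps
or in the limit. -/
def Producible (S : RTAS) (α : Assembly) : Prop :=
  ∃ f : ℕ → Assembly, f 0 = S.seed ∧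
    (∀ n, f (n + 1) = f n ∨ Attaches S (f n) (f (n + 1))) ∧
    (∀ p pl, α p = some pl ↔ ∃ n, f n p = some pl)

/-- Terminal assemblies: producible assemblies admitting no further attachment. -/
def Terminal (S : RTAS) (α : Assembly) : Prop :=
  Producible S α ∧ ∀ β, ¬ Attaches S α β

/-- Apply the reflection `r` and then the translation `v` to the assembly `α`. -/
def transform (α : Assembly) (r : Reflection) (v : ℤ × ℤ) : Assembly :=
  fun p => (α (Reflection.onPoint r (p - v))).map fun pl => (pl.1, Reflection.comp r pl.2)

/-- The configuration of an assembly: forget the reflections of the placed tiles. -/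
def config (α : Assembly) : ℤ × ℤ → Option TileType := fun p => (α p).map Prod.fst

/-- A system is directed if any two producible assemblies have the same configuration up
to a reflection and a translation. -/
def RTASDirected (S : RTAS) : Prop :=
  ∀ α β, Producible S α → Producible S β →
    ∃ (r : Reflection) (v : ℤ × ℤ), config (transform β r v) = config α

/-- A system is singly seeded if its seed consists of a single tile. -/
def SinglySeeded (S : RTAS) : Prop := ∃ p, adom S.seed = {p}

/-- `X` weakly self-assembles in `S`. -/
def WeaklySelfAssembles (S : RTAS) (X : Set (ℤ × ℤ)) : Prop :=
  ∃ B ⊆ S.tiles, ∀ α, Terminal S α →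
    ∃ (r : Reflection) (v : ℤ × ℤ),
      {p | ∃ pl, transform α r v p = some pl ∧ pl.1 ∈ B} = X

/-- `X` strictly self-assembles in `S`. -/
def StrictlySelfAssembles (S : RTAS) (X : Set (ℤ × ℤ)) : Prop :=
  ∀ α, Terminal S α →
    ∃ (r : Reflection) (v : ℤ × ℤ), adom (transform α r v) = X

/-- A semi-doubly periodic subset of `ℤ²`. -/
def SemiDoublyPeriodic (X : Set (ℤ × ℤ)) : Prop :=
  ∃ b u v : ℤ × ℤ, X = {p | ∃ n m : ℕ, p = b + (n : ℤ) • u + (m : ℤ) • v}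

/-- A finite union of semi-doubly periodic sets. -/
def FiniteUnionSDP (X : Set (ℤ × ℤ)) : Prop :=
  ∃ (k : ℕ) (f : Fin k → Set (ℤ × ℤ)),
    (∀ i, SemiDoublyPeriodic (f i)) ∧ X = ⋃ i, f i

/-- The box of radius `c` centered at `v`. -/
def box (c : ℕ) (v : ℤ × ℤ) : Set (ℤ × ℤ) :=
  {p | |p.1 - v.1| ≤ (c : ℤ) ∧ |p.2 - v.2| ≤ (c : ℤ)}

/-- The `n × m` rectangle `{0, …, n−1} × {0, …, m−1} ⊆ ℤ²`. -/
def rectShape (n m : ℕ) : Set (ℤ × ℤ) :=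
  {p | 0 ≤ p.1 ∧ p.1 < (n : ℤ) ∧ 0 ≤ p.2 ∧ p.2 < (m : ℤ)}

/-- The `n × n` square `{0, …, n−1}² ⊆ ℤ²`. -/
def squareShape (n : ℕ) : Set (ℤ × ℤ) := rectShape n n

/-- Grid adjacency on `ℤ²`. -/
def GridAdj (p q : ℤ × ℤ) : Prop := (p.1 - q.1).natAbs + (p.2 - q.2).natAbs = 1

/-- `X` is connected in the grid graph. -/
def GridConnectedOn (X : Set (ℤ × ℤ)) : Prop :=
  ∀ p ∈ X, ∀ q ∈ X, Relation.ReflTransGen (fun a b => GridAdj a b ∧ a ∈ X ∧ b ∈ X) p q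

/-- A shape: a finite nonempty connected subset of `ℤ²`. -/
def IsShape (X : Set (ℤ × ℤ)) : Prop := X.Finite ∧ X.Nonempty ∧ GridConnectedOn X

/-- A system is mismatch-free: in every producible assembly, abutting sides of adjacent
tiles are either both null or carry complementary glues of equal strength. -/
def MismatchFree (S : RTAS) : Prop :=
  ∀ α, Producible S α → ∀ p q a b, GridAdj p q → α p = some a → α q = some b →
    GlueMatch (facingGlue a p q) (facingGlue b q p)

/-- `X` is odd-symmetric with respect to some horizontal or vertical line through lattice
points. -/
def OddSymmetric (X : Set (ℤ × ℤ)) : Prop :=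
  (∃ l : ℤ, ∀ a b : ℤ, ((a, l - b) ∈ X ↔ (a, l + b) ∈ X)) ∨
  (∃ l : ℤ, ∀ a b : ℤ, ((l - a, b) ∈ X ↔ (l + a, b) ∈ X))

/-- The binding graph of `α` is a tree: connected on `adom α` and every edge is a bridge. -/
def BindingGraphIsTree (α : Assembly) : Prop :=
  (∀ p ∈ adom α, ∀ q ∈ adom α, Relation.ReflTransGen (BondAdj α) p q) ∧
  (∀ p q, BondAdj α p q →
    ¬ Relation.ReflTransGen
      (fun a b => BondAdj α a b ∧ ¬((a = p ∧ b = q) ∨ (a = q ∧ b = p))) p q)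

/-- A spanning tree of the grid graph of a shape `X`. -/
structure TreeOf (X : Set (ℤ × ℤ)) where
  adj : ℤ × ℤ → ℤ × ℤ → Prop
  symm : ∀ p q, adj p q → adj q p
  valid : ∀ p q, adj p q → p ∈ X ∧ q ∈ X ∧ GridAdj p q
  connected : ∀ p ∈ X, ∀ q ∈ X, Relation.ReflTransGen adj p q
  acyclic : ∀ p q, adj p q →
    ¬ Relation.ReflTransGen
      (fun a b => adj a b ∧ ¬((a = p ∧ b = q) ∨ (a = q ∧ b = p))) p q

/-- The vertex set of a horizontal axis at height `l` from `x₁` to `x₂`. -/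
def hAxisSet (l x₁ x₂ : ℤ) : Set (ℤ × ℤ) := {p | p.2 = l ∧ x₁ ≤ p.1 ∧ p.1 ≤ x₂}

/-- The vertex set of a vertical axis at abscissa `l` from `y₁` to `y₂`. -/
def vAxisSet (l y₁ y₂ : ℤ) : Set (ℤ × ℤ) := {p | p.1 = l ∧ y₁ ≤ p.2 ∧ p.2 ≤ y₂}

/-- A (maximal) horizontal axis of the tree `t`: consecutive vertices on the line `y = l`
joined by tree edges, not extendable on either end. -/
def IsHAxis {X : Set (ℤ × ℤ)} (t : TreeOf X) (l x₁ x₂ : ℤ) : Prop :=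
  x₁ ≤ x₂ ∧ (∀ x, x₁ ≤ x → x ≤ x₂ → ((x, l) : ℤ × ℤ) ∈ X) ∧
  (∀ x, x₁ ≤ x → x < x₂ → t.adj (x, l) (x + 1, l)) ∧
  ¬ t.adj (x₁ - 1, l) (x₁, l) ∧ ¬ t.adj (x₂, l) (x₂ + 1, l)

/-- A (maximal) vertical axis of the tree `t`. -/
def IsVAxis {X : Set (ℤ × ℤ)} (t : TreeOf X) (l y₁ y₂ : ℤ) : Prop :=
  y₁ ≤ y₂ ∧ (∀ y, y₁ ≤ y → y ≤ y₂ → ((l, y) : ℤ × ℤ) ∈ X) ∧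
  (∀ y, y₁ ≤ y → y < y₂ → t.adj (l, y) (l, y + 1)) ∧
  ¬ t.adj (l, y₁ - 1) (l, y₁) ∧ ¬ t.adj (l, y₂) (l, y₂ + 1)

/-- The union of the axial branches of `t` beginning from `v` relative to the axis `a`
(together with `v` itself): everything reachable from `v` through a neighbor not on `a`
without revisiting `v`. -/
def branch {X : Set (ℤ × ℤ)} (t : TreeOf X) (a : Set (ℤ × ℤ)) (v : ℤ × ℤ) :
    Set (ℤ × ℤ) :=
  {v} ∪ {p | ∃ w, t.adj v w ∧ w ∉ a ∧
    Relation.ReflTransGen (fun x y => t.adj x y ∧ x ≠ v ∧ y ≠ v) w p}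

/-- The axial branches of `t` beginning from `v` are symmetric across the reflection `ρ`
(of `ℤ²` across the line of the axis `a`). -/
def BranchSymmetric {X : Set (ℤ × ℤ)} (t : TreeOf X) (a : Set (ℤ × ℤ))
    (ρ : ℤ × ℤ → ℤ × ℤ) (v : ℤ × ℤ) : Prop :=
  (∀ p ∈ branch t a v, ρ p ∈ branch t a v) ∧
  (∀ p q, p ∈ branch t a v → q ∈ branch t a v → t.adj p q → t.adj (ρ p) (ρ q))

/-- `t` is off-by-one symmetric across the horizontal axis determined by `(l, x₁, x₂)`:
the branches from every vertex of the axis, except at most one, are symmetric across it. -/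
def OffByOneH {X : Set (ℤ × ℤ)} (t : TreeOf X) (l x₁ x₂ : ℤ) : Prop :=
  ∃ v₀ : ℤ × ℤ, ∀ x, x₁ ≤ x → x ≤ x₂ → ((x, l) : ℤ × ℤ) ≠ v₀ →
    BranchSymmetric t (hAxisSet l x₁ x₂) (fun p => (p.1, 2 * l - p.2)) (x, l)

/-- `t` is off-by-one symmetric across the vertical axis determined by `(l, y₁, y₂)`. -/
def OffByOneV {X : Set (ℤ × ℤ)} (t : TreeOf X) (l y₁ y₂ : ℤ) : Prop :=
  ∃ v₀ : ℤ × ℤ, ∀ y, y₁ ≤ y → y ≤ y₂ → ((l, y) : ℤ × ℤ) ≠ v₀ →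
    BranchSymmetric t (vAxisSet l y₁ y₂) (fun p => (2 * l - p.1, p.2)) (l, y)

/-- A tree is ε-symmetric if it is off-by-one symmetric across each of its axes. -/
def TreeOf.EpsSymmetric {X : Set (ℤ × ℤ)} (t : TreeOf X) : Prop :=
  (∀ l x₁ x₂, IsHAxis t l x₁ x₂ → OffByOneH t l x₁ x₂) ∧
  (∀ l y₁ y₂, IsVAxis t l y₁ y₂ → OffByOneV t l y₁ y₂)

/-- A shape is ε-symmetric if some spanning tree of its grid graph is ε-symmetric. -/
def EpsSymmetricShape (X : Set (ℤ × ℤ)) : Prop :=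
  ∃ t : TreeOf X, TreeOf.EpsSymmetric t

/-- The `c`-scaling of a shape: replace each point by a `c × c` block. -/
def scaleShape (X : Set (ℤ × ℤ)) (c : ℕ) : Set (ℤ × ℤ) :=
  {p | (Int.fdiv p.1 (c : ℤ), Int.fdiv p.2 (c : ℤ)) ∈ X}

/-- The assembly encoded by a finite list of placed tiles. -/
def listAssembly (L : List ((ℤ × ℤ) × Placement)) : Assembly :=
  fun p => (L.find? fun e => decide (e.1 = p)).map Prod.snd


/-! ### Auxiliary development for the pumping theorem -/

namespace RTAMPump

lemma glueBind_comm (g h : Glue) : glueBind g h = glueBind h g := by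
  rcases g with _ | ⟨l₁, s₁⟩ <;> rcases h with _ | ⟨l₂, s₂⟩
  · rfl
  · rfl
  · rfl
  · show (if l₂ = -l₁ ∧ s₂ = s₁ then s₁ else 0) = (if l₁ = -l₂ ∧ s₁ = s₂ then s₂ else 0)
    by_cases h1 : l₂ = -l₁ ∧ s₂ = s₁
    · rw [if_pos h1, if_pos ⟨by omega, h1.2.symm⟩, h1.2]
    · rw [if_neg h1, if_neg (by rintro ⟨a, b⟩; exact h1 ⟨by omega, b.symm⟩)]

/-- the four grid unit vectors -/
def U (e : ℤ × ℤ) : Prop := e = (1,0) ∨ e = (-1,0) ∨ e = (0,1) ∨ e = (0,-1)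

lemma facingGlue_eq (pl : Placement) (p q : ℤ × ℤ) :
    facingGlue pl p q =
      if q - p = ((1:ℤ),(0:ℤ)) then TileType.east (TileType.reflect pl.1 pl.2)
      else if q - p = ((-1:ℤ),(0:ℤ)) then TileType.west (TileType.reflect pl.1 pl.2)
      else if q - p = ((0:ℤ),(1:ℤ)) then TileType.north (TileType.reflect pl.1 pl.2)
      else if q - p = ((0:ℤ),(-1:ℤ)) then TileType.south (TileType.reflect pl.1 pl.2)
      else none := by
  obtain ⟨p1, p2⟩ := p; obtain ⟨q1, q2⟩ := q
  have h1 : ((q1, q2) = ((p1+1 : ℤ), p2)) ↔ ((q1, q2) - (p1, p2) = ((1:ℤ),(0:ℤ))) := by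
    simp [Prod.ext_iff]; omega
  have h2 : ((q1, q2) = ((p1-1 : ℤ), p2)) ↔ ((q1, q2) - (p1, p2) = ((-1:ℤ),(0:ℤ))) := by
    simp [Prod.ext_iff]; omega
  have h3 : ((q1, q2) = (p1, (p2+1 : ℤ))) ↔ ((q1, q2) - (p1, p2) = ((0:ℤ),(1:ℤ))) := by
    simp [Prod.ext_iff]; omega
  have h4 : ((q1, q2) = (p1, (p2-1 : ℤ))) ↔ ((q1, q2) - (p1, p2) = ((0:ℤ),(-1:ℤ))) := by
    simp [Prod.ext_iff]; omega
  show (if (q1, q2) = ((p1+1 : ℤ), p2) then _ else if (q1, q2) = ((p1-1:ℤ), p2) then _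
      else if (q1, q2) = (p1, (p2+1:ℤ)) then _ else if (q1, q2) = (p1, (p2-1:ℤ)) then _ else none) = _
  rw [if_congr h1 rfl (if_congr h2 rfl (if_congr h3 rfl (if_congr h4 rfl rfl)))]

lemma facingGlue_shift (pl : Placement) (p q v : ℤ × ℤ) :
    facingGlue pl (p + v) (q + v) = facingGlue pl p q := by
  rw [facingGlue_eq, facingGlue_eq]
  have : q + v - (p + v) = q - p := by ring
  rw [this]

/-- bond strength between placements `a` and `b` when `b` is at displacement `d` from `a`. -/
def PB (a b : Placement) (d : ℤ × ℤ) : ℕ :=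
  glueBind (facingGlue a (0,0) d) (facingGlue b d (0,0))

lemma bondStrength_eq {α : Assembly} {x y : ℤ × ℤ} {a b : Placement}
    (hx : α x = some a) (hy : α y = some b) :
    bondStrength α x y = PB a b (y - x) := by
  unfold bondStrength PB
  rw [hx, hy]
  have h1 : facingGlue a x y = facingGlue a (0,0) (y - x) := by
    have := facingGlue_shift a (0,0) (y - x) x
    simpa [Prod.mk_zero_zero] using this
  have h2 : facingGlue b y x = facingGlue b (y - x) (0,0) := by
    have := facingGlue_shift b (y - x) (0,0) x
    simpa [Prod.mk_zero_zero] using this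
  show glueBind (facingGlue a x y) (facingGlue b y x) = _
  rw [h1, h2]

lemma PB_comm (a b : Placement) (d : ℤ × ℤ) : PB a b d = PB b a (-d) := by
  unfold PB
  have h1 : facingGlue a (0,0) d = facingGlue a (-d) (0,0) := by
    have := facingGlue_shift a (-d) (0,0) d
    simpa [Prod.mk_zero_zero] using this
  have h2 : facingGlue b d (0,0) = facingGlue b (0,0) (-d) := by
    have := facingGlue_shift b (0,0) (-d) d
    simpa [Prod.mk_zero_zero] using this
  rw [h1, h2, glueBind_comm]

lemma bondStrength_symm (α : Assembly) (x y : ℤ × ℤ) :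
    bondStrength α x y = bondStrength α y x := by
  unfold bondStrength
  cases hx : α x <;> cases hy : α y <;> try rfl
  exact glueBind_comm _ _

lemma PB_pos_unit {a b : Placement} {d : ℤ × ℤ} (h : 0 < PB a b d) : U d := by
  by_contra hd
  unfold U at hd; push_neg at hd
  have : facingGlue a (0,0) d = none := by
    rw [facingGlue_eq]
    have hdz : d - ((0,0) : ℤ × ℤ) = d := by
      obtain ⟨d1, d2⟩ := d; simp [Prod.ext_iff]
    rw [hdz]
    rw [if_neg (by simpa using hd.1), if_neg (by simpa using hd.2.1),
      if_neg (by simpa using hd.2.2.1), if_neg (by simpa using hd.2.2.2)]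
  rw [PB, this] at h
  have hz : glueBind none (facingGlue b d (0,0)) = 0 := rfl
  rw [hz] at h
  exact lt_irrefl 0 h

lemma bondAdj_some {α : Assembly} {x y : ℤ × ℤ} (h : BondAdj α x y) :
    ∃ a b, α x = some a ∧ α y = some b := by
  unfold BondAdj bondStrength at h
  cases hx : α x <;> cases hy : α y <;> rw [hx, hy] at h <;> simp at h
  exact ⟨_, _, rfl, rfl⟩

lemma reflect_comp (T : TileType) (r ρ : Reflection) :
    TileType.reflect T (Reflection.comp r ρ) = TileType.reflect (TileType.reflect T ρ) r := by
  obtain ⟨r1, r2⟩ := r; obtain ⟨ρ1, ρ2⟩ := ρ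
  cases r1 <;> cases r2 <;> cases ρ1 <;> cases ρ2 <;> rfl

lemma onPoint_neg (r : Reflection) (d : ℤ × ℤ) :
    Reflection.onPoint r (-d) = -(Reflection.onPoint r d) := by
  obtain ⟨r1, r2⟩ := r; obtain ⟨d1, d2⟩ := d
  cases r1 <;> cases r2 <;> simp [Reflection.onPoint, Prod.ext_iff]

lemma onPoint_D (d : ℤ × ℤ) : Reflection.onPoint (false, false) d = d := by
  simp [Reflection.onPoint]

lemma comp_D (ρ : Reflection) : Reflection.comp (false, false) ρ = ρ := by
  obtain ⟨a, b⟩ := ρ; simp [Reflection.comp]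

lemma facing_comp (T : TileType) (ρ r : Reflection) (d : ℤ × ℤ) (hd : U d) :
    facingGlue (T, Reflection.comp r ρ) (0,0) d
      = facingGlue (T, ρ) (0,0) (Reflection.onPoint r d) := by
  obtain ⟨r1, r2⟩ := r; obtain ⟨ρ1, ρ2⟩ := ρ
  rcases hd with h | h | h | h <;> subst h <;>
    cases r1 <;> cases r2 <;> cases ρ1 <;> cases ρ2 <;> rfl

/-- linear functional given by a direction -/
def xi (s v : ℤ × ℤ) : ℤ := s.1 * v.1 + s.2 * v.2

/-- rectification of a step -/
def rect (s e : ℤ × ℤ) : ℤ × ℤ := if xi s e < 0 then -e else e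

/-- the reflection negating the `s` axis -/
def rflS (s : ℤ × ℤ) : Reflection := (decide (s.1 ≠ 0), decide (s.2 ≠ 0))

lemma xi_add (s a b : ℤ × ℤ) : xi s (a + b) = xi s a + xi s b := by
  obtain ⟨a1, a2⟩ := a; obtain ⟨b1, b2⟩ := b; simp [xi]; ring

lemma xi_sub (s a b : ℤ × ℤ) : xi s (a - b) = xi s a - xi s b := by
  obtain ⟨a1, a2⟩ := a; obtain ⟨b1, b2⟩ := b; simp [xi]; ring

lemma xi_neg (s a : ℤ × ℤ) : xi s (-a) = -xi s a := by
  obtain ⟨a1, a2⟩ := a; simp [xi]; ring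

lemma xi_nsmul (s : ℤ × ℤ) (k : ℕ) (a : ℤ × ℤ) : xi s (k • a) = k * xi s a := by
  induction k with
  | zero => simp [xi]
  | succ k ih => rw [succ_nsmul, xi_add, ih]; push_cast; ring

lemma xi_self {s : ℤ × ℤ} (hs : U s) : xi s s = 1 := by
  rcases hs with h | h | h | h <;> subst h <;> decide

lemma xi_cases {s e : ℤ × ℤ} (hs : U s) (he : U e) :
    xi s e = 0 ∨ xi s e = 1 ∨ xi s e = -1 := by
  rcases hs with h | h | h | h <;> subst h <;>
    rcases he with h' | h' | h' | h' <;> subst h' <;> decide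

lemma onPoint_rflS_perp {s e : ℤ × ℤ} (hs : U s) (he : U e) (h : xi s e = 0) :
    Reflection.onPoint (rflS s) e = e := by
  rcases hs with h1 | h1 | h1 | h1 <;> subst h1 <;>
    rcases he with h2 | h2 | h2 | h2 <;> subst h2 <;> revert h <;> decide

lemma onPoint_rflS_par {s e : ℤ × ℤ} (hs : U s) (he : U e) (h : xi s e ≠ 0) :
    Reflection.onPoint (rflS s) e = -e := by
  rcases hs with h1 | h1 | h1 | h1 <;> subst h1 <;>
    rcases he with h2 | h2 | h2 | h2 <;> subst h2 <;> revert h <;> decide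

lemma eq_s_of_xi_one {s e : ℤ × ℤ} (hs : U s) (he : U e) (h : xi s e = 1) : e = s := by
  rcases hs with h1 | h1 | h1 | h1 <;> subst h1 <;>
    rcases he with h2 | h2 | h2 | h2 <;> subst h2 <;> revert h <;> decide

lemma par_eq_or {s e : ℤ × ℤ} (hs : U s) (he : U e) (h : xi s e ≠ 0) :
    e = s ∨ e = -s := by
  rcases hs with h1 | h1 | h1 | h1 <;> subst h1 <;>
    rcases he with h2 | h2 | h2 | h2 <;> subst h2 <;> revert h <;> decide

lemma U_rect {s e : ℤ × ℤ} (he : U e) : U (rect s e) := by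
  rw [rect]
  split_ifs
  · rcases he with h | h | h | h <;> subst h <;> unfold U <;> norm_num
  · exact he

lemma U_neg {e : ℤ × ℤ} (he : U e) : U (-e) := by
  rcases he with h | h | h | h <;> subst h <;> unfold U <;> norm_num

lemma rect_ne_zero {s e : ℤ × ℤ} (he : U e) : rect s e ≠ 0 := by
  have := U_rect (s := s) he
  rcases this with h | h | h | h <;> rw [h] <;> decide

lemma xi_rect {s e : ℤ × ℤ} (hs : U s) (he : U e) :
    xi s (rect s e) = |xi s e| := by
  rw [rect]
  rcases xi_cases hs he with h | h | h <;> rw [h] <;> split_ifs <;>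
    simp_all [xi_neg] <;> omega

lemma xi_box {s v : ℤ × ℤ} (hs : U s) {c : ℕ} (hv : v ∈ box c (0,0)) : xi s v ≤ c := by
  simp only [box, Set.mem_setOf_eq, sub_zero] at hv
  obtain ⟨h1, h2⟩ := hv
  obtain ⟨ha, hb⟩ := abs_le.mp h1
  obtain ⟨hc', hd⟩ := abs_le.mp h2
  rcases hs with h | h | h | h <;> subst h <;> simp [xi] <;> omega

lemma adom_update (α : Assembly) (x : ℤ × ℤ) (pl : Placement) :
    adom (Function.update α x (some pl)) = adom α ∪ {x} := by
  ext q
  by_cases hq : q = x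
  · subst hq; simp [adom, Function.update_self]
  · simp [adom, Function.update_of_ne hq, hq]

lemma bondStrength_update_ne (α : Assembly) (x : ℤ × ℤ) (g : Option Placement)
    {u v : ℤ × ℤ} (hu : u ≠ x) (hv : v ≠ x) :
    bondStrength (Function.update α x g) u v = bondStrength α u v := by
  unfold bondStrength
  rw [Function.update_of_ne hu, Function.update_of_ne hv]

lemma stable_insert {α : Assembly} (hst : Stable α 1) {x : ℤ × ℤ} (hx : α x = none)
    (pl : Placement) {y : ℤ × ℤ} (hy : α y ≠ none)
    (hbond : 0 < bondStrength (Function.update α x (some pl)) x y) :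
    Stable (Function.update α x (some pl)) 1 := by
  set β := Function.update α x (some pl) with hβ
  have hadom : adom β = adom α ∪ {x} := adom_update α x pl
  have hyx : y ≠ x := fun h => hy (h ▸ hx)
  have hxβ : x ∈ adom β := by rw [hadom]; right; rfl
  have hyβ : y ∈ adom β := by rw [hadom]; left; exact hy
  intro A hA hA1 hA2
  by_cases hxA : x ∈ A
  · by_cases hyA : y ∈ A
    · -- both new tile and its neighbor in A : use stability of α on A \ {x}
      have hA'sub : A \ {x} ⊆ adom α := by
        intro q hq
        have := hA hq.1
        rw [hadom] at this
        rcases this with h | h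
        · exact h
        · exact absurd h hq.2
      have hA'ne : (A \ {x}).Nonempty := ⟨y, hyA, hyx⟩
      have hcomp : (adom α \ (A \ {x})).Nonempty := by
        obtain ⟨u, hu1, hu2⟩ := hA2
        have hux : u ≠ x := fun h => hu2 (h ▸ hxA)
        have huα : u ∈ adom α := by
          rw [hadom] at hu1; rcases hu1 with h | h
          · exact h
          · exact absurd h hux
        exact ⟨u, huα, fun h => hu2 h.1⟩
      obtain ⟨E, hE1, hE2⟩ := hst (A \ {x}) hA'sub hA'ne hcomp
      refine ⟨E, ?_, ?_⟩
      · intro e he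
        obtain ⟨h1, h2⟩ := hE1 e he
        have he2x : e.2 ≠ x := fun h => by
          have hne : α e.2 ≠ none := h2.1
          rw [h, hx] at hne; exact hne rfl
        refine ⟨h1.1, ?_, ?_⟩
        · rw [hadom]; left; exact h2.1
        · intro hcon
          exact h2.2 ⟨hcon, he2x⟩
      · calc (1:ℕ) ≤ ∑ e ∈ E, bondStrength α e.1 e.2 := hE2
          _ = ∑ e ∈ E, bondStrength β e.1 e.2 := by
            apply Finset.sum_congr rfl
            intro e he
            obtain ⟨h1, h2⟩ := hE1 e he
            have he1x : e.1 ≠ x := fun h => h1.2 (h ▸ rfl)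
            have he2x : e.2 ≠ x := fun h => by
              have : α e.2 ≠ none := h2.1
              rw [h, hx] at this; exact this rfl
            exact (bondStrength_update_ne α x (some pl) he1x he2x).symm
    · -- x ∈ A, y ∉ A : the new bond crosses the cut
      refine ⟨{(x, y)}, ?_, ?_⟩
      · intro e he
        rw [Finset.mem_singleton] at he; subst he
        exact ⟨hxA, hyβ, hyA⟩
      · rw [Finset.sum_singleton]
        exact hbond
  · by_cases hyA : y ∈ A
    · refine ⟨{(y, x)}, ?_, ?_⟩
      · intro e he
        rw [Finset.mem_singleton] at he; subst he
        exact ⟨hyA, hxβ, hxA⟩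
      · rw [Finset.sum_singleton]
        show 1 ≤ bondStrength β y x
        rw [bondStrength_symm]
        exact hbond
    · -- x, y ∉ A : A is a cut of α as well
      have hAα : A ⊆ adom α := by
        intro q hq
        have := hA hq
        rw [hadom] at this
        rcases this with h | h
        · exact h
        · exact absurd (h ▸ hq) hxA
      have hcomp : (adom α \ A).Nonempty := ⟨y, hy, hyA⟩
      obtain ⟨E, hE1, hE2⟩ := hst A hAα hA1 hcomp
      refine ⟨E, ?_, ?_⟩
      · intro e he
        obtain ⟨h1, h2⟩ := hE1 e he
        refine ⟨h1, ?_, h2.2⟩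
        rw [hadom]; left; exact h2.1
      · calc (1:ℕ) ≤ ∑ e ∈ E, bondStrength α e.1 e.2 := hE2
          _ = ∑ e ∈ E, bondStrength β e.1 e.2 := by
            apply Finset.sum_congr rfl
            intro e he
            obtain ⟨h1, h2⟩ := hE1 e he
            have he1x : e.1 ≠ x := fun h => hxA (h ▸ h1)
            have he2x : e.2 ≠ x := fun h => by
              have : α e.2 ≠ none := h2.1
              rw [h, hx] at this; exact this rfl
            exact (bondStrength_update_ne α x (some pl) he1x he2x).symm

lemma stable_conn {α : Assembly} (h : Stable α 1) {a b : ℤ × ℤ}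
    (ha : a ∈ adom α) (hb : b ∈ adom α) : Relation.ReflTransGen (BondAdj α) a b := by
  by_contra hnot
  set A : Set (ℤ × ℤ) := {q | q ∈ adom α ∧ Relation.ReflTransGen (BondAdj α) a q} with hA
  obtain ⟨E, hE1, hE2⟩ := h A (fun q hq => hq.1) ⟨a, ha, Relation.ReflTransGen.refl⟩
    ⟨b, hb, fun hb' => hnot hb'.2⟩
  have : ∃ e ∈ E, 0 < bondStrength α e.1 e.2 := by
    by_contra h'
    push_neg at h'
    have : ∑ e ∈ E, bondStrength α e.1 e.2 = 0 :=
      Finset.sum_eq_zero (fun e he => by have := h' e he; omega)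
    omega
  obtain ⟨e, he, hpos⟩ := this
  obtain ⟨h1, h2⟩ := hE1 e he
  exact h2.2 ⟨h2.1, h1.2.tail hpos⟩

section Walk

variable {X : Type*} {r : X → X → Prop}

lemma exists_walk {a b : X} (h : Relation.ReflTransGen r a b) :
    ∃ (n : ℕ) (z : ℕ → X), z 0 = a ∧ z n = b ∧ ∀ t, t < n → r (z t) (z (t+1)) := by
  induction h with
  | refl => exact ⟨0, fun _ => a, rfl, rfl, by omega⟩
  | @tail b' c hab hbc ih =>
    obtain ⟨n, z, h0, hn, hstep⟩ := ih
    refine ⟨n + 1, fun t => if t ≤ n then z t else c, ?_, ?_, ?_⟩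
    · simp [h0]
    · simp
    · intro t ht
      by_cases h1 : t + 1 ≤ n
      · simp only [if_pos (show t ≤ n by omega), if_pos h1]
        exact hstep t (by omega)
      · have ht' : t = n := by omega
        subst ht'
        simp only [if_pos (le_refl t), if_neg (show ¬ t + 1 ≤ t by omega)]
        rw [hn]; exact hbc

open Classical in
lemma exists_min_walk {a b : X} (h : Relation.ReflTransGen r a b) :
    ∃ (n : ℕ) (z : ℕ → X), z 0 = a ∧ z n = b ∧ (∀ t, t < n → r (z t) (z (t+1))) ∧
      ∀ i, i ≤ n → ∀ j, j ≤ n → z i = z j → i = j := by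
  have hex : ∃ n : ℕ, ∃ z : ℕ → X, z 0 = a ∧ z n = b ∧ ∀ t, t < n → r (z t) (z (t+1)) :=
    exists_walk h
  obtain ⟨z, h0, hn, hstep⟩ := Nat.find_spec hex
  set n := Nat.find hex with hndef
  refine ⟨n, z, h0, hn, hstep, ?_⟩
  have key : ∀ i j, i < j → j ≤ n → z i = z j → False := by
    intro i j hij hjn heq
    have hlt : n - (j - i) < n := by omega
    apply Nat.find_min hex hlt
    refine ⟨fun t => if t ≤ i then z t else z (t + (j - i)), ?_, ?_, ?_⟩
    · show (if 0 ≤ i then z 0 else z (0 + (j - i))) = a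
      rw [if_pos (Nat.zero_le i)]; exact h0
    · show (if n - (j - i) ≤ i then z (n - (j - i)) else z (n - (j - i) + (j - i))) = b
      by_cases hcase : n - (j - i) ≤ i
      · have hji : j = n := by omega
        have hni : n - (j - i) = i := by omega
        rw [if_pos hcase, hni, heq, hji]; exact hn
      · rw [if_neg hcase]
        have hni : n - (j - i) + (j - i) = n := by omega
        rw [hni]; exact hn
    · intro t ht
      show r (if t ≤ i then z t else z (t + (j - i)))
        (if t + 1 ≤ i then z (t+1) else z (t + 1 + (j - i)))
      by_cases h1 : t + 1 ≤ i
      · rw [if_pos (by omega : t ≤ i), if_pos h1]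
        exact hstep t (by omega)
      · by_cases h2 : t ≤ i
        · have hti : t = i := by omega
          rw [if_pos h2, if_neg h1, hti, heq]
          have hrw : i + 1 + (j - i) = j + 1 := by omega
          rw [hrw]
          exact hstep j (by omega)
        · rw [if_neg h2, if_neg (by omega : ¬ t + 1 ≤ i)]
          have hrw : t + 1 + (j - i) = t + (j - i) + 1 := by omega
          rw [hrw]
          exact hstep (t + (j - i)) (by omega)
  intro i hi j hj heq
  rcases lt_trichotomy i j with hlt | hlt | hlt
  · exact absurd heq (fun he => key i j hlt hj he)
  · exact hlt
  · exact absurd heq.symm (fun he => key j i hlt hi he)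

end Walk

section Chain

variable {S : RTAS} {f : ℕ → Assembly}

lemma chain_mono (hfs : ∀ k, f (k+1) = f k ∨ Attaches S (f k) (f (k+1)))
    {k j : ℕ} (hkj : k ≤ j) {q : ℤ × ℤ} {pl : Placement} (h : f k q = some pl) :
    f j q = some pl := by
  induction j with
  | zero => have : k = 0 := by omega
            exact this ▸ h
  | succ j ih =>
    by_cases hc : k = j + 1
    · exact hc ▸ h
    · have hkj' : k ≤ j := by omega
      have hj := ih hkj'
      rcases hfs j with he | ⟨p₀, t₀, r₀, hp₀, _, heq, _⟩
      · rw [he]; exact hj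
      · rw [heq, Function.update_of_ne]
        · exact hj
        · intro hqp
          rw [hqp, hp₀] at hj
          exact Option.some_ne_none _ hj.symm

lemma chain_stable (hτ : S.temp = 1) (hf0 : f 0 = S.seed)
    (hfs : ∀ k, f (k+1) = f k ∨ Attaches S (f k) (f (k+1))) (k : ℕ) :
    Stable (f k) 1 := by
  induction k with
  | zero => rw [hf0]; have := S.seed_stable; rwa [hτ] at this
  | succ k ih =>
    rcases hfs k with he | ⟨p₀, t₀, r₀, hp₀, _, heq, hstab⟩
    · rw [he]; exact ih
    · rwa [hτ] at hstab

lemma chain_tiles (hf0 : f 0 = S.seed)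
    (hfs : ∀ k, f (k+1) = f k ∨ Attaches S (f k) (f (k+1))) (k : ℕ)
    {q : ℤ × ℤ} {pl : Placement} (h : f k q = some pl) : pl.1 ∈ S.tiles := by
  induction k generalizing q pl with
  | zero => rw [hf0] at h; exact S.seed_tiles q pl h
  | succ k ih =>
    rcases hfs k with he | ⟨p₀, t₀, r₀, hp₀, ht₀, heq, _⟩
    · rw [he] at h; exact ih h
    · rw [heq] at h
      by_cases hqp : q = p₀
      · subst hqp
        rw [Function.update_self] at h
        cases h; exact ht₀
      · rw [Function.update_of_ne hqp] at h
        exact ih h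

end Chain

section Build

open Classical in
/-- Build producible assemblies by laying a bonded chain of tiles starting at the seed. -/
lemma build (S : RTAS) (hτ : S.temp = 1) (pos : ℕ → ℤ × ℤ) (pl : ℕ → Placement)
    (hin : S.seed (pos 0) ≠ none)
    (hbond : ∀ t, 0 < PB (pl t) (pl (t+1)) (pos (t+1) - pos t))
    (htile : ∀ t, (pl t).1 ∈ S.tiles)
    (hseedc : ∀ t pl', S.seed (pos t) = some pl' → pl' = pl t)
    (hcons : ∀ t t', pos t = pos t' → pl t = pl t') (m : ℕ) :
    ∃ γ, Producible S γ ∧ (adom γ).Finite ∧ ∀ t, t ≤ m → pos t ∈ adom γ := by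
  set γ : ℕ → Assembly := fun k q =>
    if h : ∃ t, t ≤ k ∧ pos t = q then some (pl (Nat.find h)) else S.seed q with hγdef
  have E1 : ∀ k t, t ≤ k → γ k (pos t) = some (pl t) := by
    intro k t htk
    have h : ∃ t', t' ≤ k ∧ pos t' = pos t := ⟨t, htk, rfl⟩
    show (if h : ∃ t', t' ≤ k ∧ pos t' = pos t then some (pl (Nat.find h)) else S.seed (pos t))
        = some (pl t)
    rw [dif_pos h]
    have hspec := Nat.find_spec h
    rw [hcons _ _ hspec.2]
  have E2 : ∀ k q, (∀ t, t ≤ k → pos t ≠ q) → γ k q = S.seed q := by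
    intro k q hq
    show (if h : ∃ t', t' ≤ k ∧ pos t' = q then some (pl (Nat.find h)) else S.seed q) = S.seed q
    rw [dif_neg]
    rintro ⟨t, ht, hteq⟩
    exact hq t ht hteq
  have Eval : ∀ k q, γ k q = S.seed q ∨ ∃ t, t ≤ k ∧ pos t = q ∧ γ k q = some (pl t) := by
    intro k q
    by_cases h : ∃ t, t ≤ k ∧ pos t = q
    · obtain ⟨t, ht, hteq⟩ := h
      right
      exact ⟨t, ht, hteq, by rw [← hteq]; exact E1 k t ht⟩
    · left
      push_neg at h
      exact E2 k q h
  have Emono : ∀ j k, j ≤ k → ∀ q pl', γ j q = some pl' → γ k q = some pl' := by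
    intro j k hjk q pl' hval
    rcases Eval j q with hs | ⟨t, ht, hteq, hv⟩
    · rw [hs] at hval
      rcases Eval k q with hs' | ⟨t', ht', hteq', hv'⟩
      · rw [hs']; exact hval
      · rw [hv']
        have := hseedc t' pl' (by rw [hteq']; exact hval)
        rw [this]
    · rw [hv] at hval
      cases hval
      rw [← hteq]
      exact E1 k t (le_trans ht hjk)
  have hγ0 : γ 0 = S.seed := by
    funext q
    rcases Eval 0 q with hs | ⟨t, ht, hteq, hv⟩
    · exact hs
    · interval_cases t
      rw [hv, ← hteq]
      obtain ⟨pl0, hpl0⟩ : ∃ pl0, S.seed (pos 0) = some pl0 := by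
        cases hseed : S.seed (pos 0)
        · exact absurd hseed hin
        · exact ⟨_, rfl⟩
      rw [hpl0, hseedc 0 pl0 hpl0]
  -- a generic "no change away from the new position" lemma
  have Eagree : ∀ k q, q ≠ pos (k+1) → γ (k+1) q = γ k q := by
    intro k q hq
    rcases Eval k q with hs' | ⟨t', ht', hteq', hv'⟩
    · rcases Eval (k+1) q with hs | ⟨t, ht, hteq, hv⟩
      · rw [hs, hs']
      · have htk : t ≤ k := by
          rcases Nat.lt_or_ge t (k+1) with h' | h'
          · omega
          · exfalso
            have : t = k + 1 := by omega
            rw [this] at hteq; exact hq hteq.symm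
        have h5 : γ k q = some (pl t) := by rw [← hteq]; exact E1 k t htk
        rw [hv, h5]
    · have h5 : γ (k+1) q = some (pl t') := by
        rw [← hteq']; exact E1 (k+1) t' (by omega)
      rw [h5, hv']
  have hmain : ∀ k, Stable (γ k) 1 ∧ (γ (k+1) = γ k ∨ Attaches S (γ k) (γ (k+1))) := by
    have hstab : ∀ k, Stable (γ k) 1 → (γ (k+1) = γ k ∨ Attaches S (γ k) (γ (k+1))) := by
      intro k hst
      by_cases hocc : γ k (pos (k+1)) = none
      · right
        have hupd : γ (k+1) = Function.update (γ k) (pos (k+1)) (some (pl (k+1))) := by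
          funext q
          by_cases hq : q = pos (k+1)
          · subst hq
            rw [Function.update_self, E1 (k+1) (k+1) (le_refl _)]
          · rw [Function.update_of_ne hq]
            exact Eagree k q hq
        have hyx : pos k ≠ pos (k+1) := by
          intro hteq
          rw [← hteq, E1 k k (le_refl k)] at hocc
          exact Option.some_ne_none _ hocc
        have hbond' : 0 < bondStrength
            (Function.update (γ k) (pos (k+1)) (some (pl (k+1)))) (pos (k+1)) (pos k) := by
          have hx : Function.update (γ k) (pos (k+1)) (some (pl (k+1))) (pos (k+1))
              = some (pl (k+1)) := Function.update_self _ _ _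
          have hy : Function.update (γ k) (pos (k+1)) (some (pl (k+1))) (pos k)
              = some (pl k) := by
            rw [Function.update_of_ne hyx]
            exact E1 k k (le_refl k)
          rw [bondStrength_eq hx hy, PB_comm]
          have hns : -(pos k - pos (k+1)) = pos (k+1) - pos k := by ring
          rw [hns]
          exact hbond k
        refine ⟨pos (k+1), (pl (k+1)).1, (pl (k+1)).2, hocc, htile (k+1), ?_, ?_⟩
        · rw [hupd]
        · rw [hτ, hupd]
          apply stable_insert hst hocc
          · show γ k (pos k) ≠ none
            rw [E1 k k (le_refl k)]
            exact Option.some_ne_none _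
          · exact hbond'
      · left
        funext q
        by_cases hq : q = pos (k+1)
        · subst hq
          obtain ⟨plq, hplq⟩ : ∃ plq, γ k (pos (k+1)) = some plq := by
            cases hv : γ k (pos (k+1))
            · exact absurd hv hocc
            · exact ⟨_, rfl⟩
          rw [hplq, E1 (k+1) (k+1) (le_refl _)]
          rcases Eval k (pos (k+1)) with hs | ⟨t, ht, hteq, hv⟩
          · rw [hs] at hplq
            rw [hseedc (k+1) plq hplq]
          · rw [hv] at hplq
            cases hplq
            rw [hcons t (k+1) hteq]
        · exact Eagree k q hq
    intro k
    induction k with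
    | zero =>
      have h0 : Stable (γ 0) 1 := by
        rw [hγ0]
        have := S.seed_stable
        rwa [hτ] at this
      exact ⟨h0, hstab 0 h0⟩
    | succ k ih =>
      obtain ⟨hst, hstep⟩ := ih
      have hst' : Stable (γ (k+1)) 1 := by
        rcases hstep with he | hat
        · rw [he]; exact hst
        · obtain ⟨p₀, t₀, r₀, _, _, heq, hstab'⟩ := hat
          rw [hτ] at hstab'
          exact hstab'
      exact ⟨hst', hstab (k+1) hst'⟩
  refine ⟨γ m, ?_, ?_, ?_⟩
  · refine ⟨fun k => γ (min k m), ?_, ?_, ?_⟩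
    · show γ (min 0 m) = S.seed
      rw [Nat.zero_min, hγ0]
    · intro k
      show γ (min (k+1) m) = γ (min k m) ∨ Attaches S (γ (min k m)) (γ (min (k+1) m))
      by_cases hk : k < m
      · have h1 : min k m = k := min_eq_left (by omega)
        have h2 : min (k+1) m = k+1 := min_eq_left (by omega)
        rw [h1, h2]
        exact (hmain k).2
      · have h1 : min k m = m := min_eq_right (by omega)
        have h2 : min (k+1) m = m := min_eq_right (by omega)
        left
        rw [h1, h2]
    · intro q pl'
      constructor
      · intro h
        refine ⟨m, ?_⟩
        show γ (min m m) q = some pl'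
        rwa [Nat.min_self]
      · rintro ⟨k, hk⟩
        exact Emono (min k m) m (min_le_right k m) q pl' hk
  · have hsub : adom (γ m) ⊆ adom S.seed ∪ (fun t => pos t) '' (Set.Iic m) := by
      intro q hq
      rcases Eval m q with hs | ⟨t, ht, hteq, hv⟩
      · left
        show S.seed q ≠ none
        rwa [← hs]
      · right
        exact ⟨t, ht, hteq⟩
    exact Set.Finite.subset (Set.Finite.union S.seed_finite ((Set.finite_Iic m).image _)) hsub
  · intro t ht
    show γ m (pos t) ≠ none
    rw [E1 m t ht]
    exact Option.some_ne_none _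

end Build

/-- the perpendicular direction -/
def perpS (s : ℤ × ℤ) : ℤ × ℤ := (-s.2, s.1)

lemma perp_cases {s e : ℤ × ℤ} (hs : U s) (he : U e) (h : xi s e = 0) :
    e = perpS s ∨ e = -perpS s := by
  rcases hs with h1 | h1 | h1 | h1 <;> subst h1 <;>
    rcases he with h2 | h2 | h2 | h2 <;> subst h2 <;> revert h <;> decide

section PumpCore

variable (s : ℤ × ℤ) (z : ℕ → ℤ × ℤ) (P : ℕ → Placement) (m₀ n : ℕ)

/-- step of the walk -/
def stepF (t : ℕ) : ℤ × ℤ := z (t+1) - z t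

open Classical in
/-- flip applied to the `t`-th tile of the rectified walk -/
noncomputable def phiF (t : ℕ) : Reflection :=
  if t < n ∧ xi s (stepF z t) ≠ 0 then (if xi s (stepF z t) < 0 then rflS s else (false, false))
  else if m₀ + 1 ≤ t ∧ xi s (stepF z (t-1)) ≠ 0 then
    (if xi s (stepF z (t-1)) < 0 then rflS s else (false, false))
  else (false, false)

/-- placement of the `t`-th tile of the rectified walk -/
noncomputable def QF (t : ℕ) : Placement :=
  ((P t).1, Reflection.comp (phiF s z m₀ n t) (P t).2)

/-- position of the `t`-th tile of the rectified walk -/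
def wF (t : ℕ) : ℤ × ℤ := z m₀ + ∑ u ∈ Finset.Ico m₀ t, rect s (stepF z u)

variable {s z P m₀ n}
variable (hs : U s) (hu : ∀ t, t < n → U (stepF z t))
  (hnb : ∀ t, t + 2 ≤ n → z (t+2) ≠ z t)
  (hm₀n : m₀ < n) (hem : stepF z m₀ = s)

lemma phi_vals (t : ℕ) : phiF s z m₀ n t = (false, false) ∨ phiF s z m₀ n t = rflS s := by
  unfold phiF
  split_ifs <;> simp

include hnb in
lemma step_nb {t : ℕ} (h1 : t + 2 ≤ n) : stepF z (t+1) ≠ -stepF z t := by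
  intro h
  apply hnb t h1
  have hz : z (t+2) - z t = (z (t+2) - z (t+1)) + (z (t+1) - z t) := by ring
  have : z (t+2) - z t = 0 := by
    rw [hz]
    show stepF z (t+1) + stepF z t = 0
    rw [h]; ring
  exact sub_eq_zero.mp this

include hs hu hnb in
lemma step_par_eq {t : ℕ} (h1 : t + 1 < n) (hpt : xi s (stepF z t) ≠ 0)
    (hpt1 : xi s (stepF z (t+1)) ≠ 0) : stepF z (t+1) = stepF z t := by
  have hnb' := step_nb hnb (t := t) (by omega)
  rcases par_eq_or hs (hu t (by omega)) hpt with h | h <;>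
    rcases par_eq_or hs (hu (t+1) (by omega)) hpt1 with h' | h'
  · rw [h, h']
  · exfalso; apply hnb'; rw [h', h]
  · exfalso; apply hnb'; rw [h', h, neg_neg]
  · rw [h, h']

include hs hu hnb in
lemma step_perp_eq {t : ℕ} (h1 : t + 1 < n) (hpt : xi s (stepF z t) = 0)
    (hpt1 : xi s (stepF z (t+1)) = 0) : stepF z (t+1) = stepF z t := by
  have hnb' := step_nb hnb (t := t) (by omega)
  rcases perp_cases hs (hu t (by omega)) hpt with h | h <;>
    rcases perp_cases hs (hu (t+1) (by omega)) hpt1 with h' | h'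
  · rw [h, h']
  · exfalso; apply hnb'; rw [h', h]
  · exfalso; apply hnb'; rw [h', h, neg_neg]
  · rw [h, h']

include hs hu in
lemma CL {t : ℕ} (ht : m₀ ≤ t) (htn : t < n) :
    Reflection.onPoint (phiF s z m₀ n t) (rect s (stepF z t)) = stepF z t := by
  have he := hu t htn
  rcases xi_cases hs he with h0 | h1 | hm1
  · rw [rect, if_neg (by omega)]
    rcases phi_vals (s := s) (z := z) (m₀ := m₀) (n := n) t with h | h <;> rw [h]
    · exact onPoint_D _
    · exact onPoint_rflS_perp hs he h0
  · rw [rect, if_neg (by omega)]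
    rw [phiF, if_pos ⟨htn, by omega⟩, if_neg (by omega)]
    exact onPoint_D _
  · rw [rect, if_pos (by omega)]
    rw [phiF, if_pos ⟨htn, by omega⟩, if_pos (by omega)]
    rw [onPoint_neg, onPoint_rflS_par hs he (by omega), neg_neg]

include hs hu hnb in
lemma CL' {t : ℕ} (ht : m₀ ≤ t) (htn : t < n) :
    Reflection.onPoint (phiF s z m₀ n (t+1)) (rect s (stepF z t)) = stepF z t := by
  have he := hu t htn
  rcases xi_cases hs he with h0 | h1 | hm1
  · rw [rect, if_neg (by omega)]
    rcases phi_vals (s := s) (z := z) (m₀ := m₀) (n := n) (t+1) with h | h <;> rw [h]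
    · exact onPoint_D _
    · exact onPoint_rflS_perp hs he h0
  · rw [rect, if_neg (by omega)]
    by_cases hb : t + 1 < n ∧ xi s (stepF z (t+1)) ≠ 0
    · rw [phiF, if_pos hb]
      rw [step_par_eq hs hu hnb hb.1 (by omega) hb.2]
      rw [if_neg (by omega)]
      exact onPoint_D _
    · rw [phiF, if_neg hb, if_pos ⟨by omega, by simp only [Nat.add_sub_cancel]; omega⟩]
      simp only [Nat.add_sub_cancel]
      rw [if_neg (by omega)]
      exact onPoint_D _
  · rw [rect, if_pos (by omega)]
    by_cases hb : t + 1 < n ∧ xi s (stepF z (t+1)) ≠ 0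
    · rw [phiF, if_pos hb]
      rw [step_par_eq hs hu hnb hb.1 (by omega) hb.2]
      rw [if_pos (by omega)]
      rw [onPoint_neg, onPoint_rflS_par hs he (by omega), neg_neg]
    · rw [phiF, if_neg hb, if_pos ⟨by omega, by simp only [Nat.add_sub_cancel]; omega⟩]
      simp only [Nat.add_sub_cancel]
      rw [if_pos (by omega)]
      rw [onPoint_neg, onPoint_rflS_par hs he (by omega), neg_neg]

include hs hm₀n hem in
lemma QF_m₀ : QF s z P m₀ n m₀ = P m₀ := by
  have : phiF s z m₀ n m₀ = (false, false) := by
    rw [phiF, if_pos ⟨hm₀n, by rw [hem, xi_self hs]; omega⟩]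
    rw [hem, xi_self hs]
    rw [if_neg (by omega)]
  rw [QF, this, comp_D]

lemma wF_m₀ : wF s z m₀ m₀ = z m₀ := by
  rw [wF, Finset.Ico_self, Finset.sum_empty, add_zero]

lemma wF_succ {t : ℕ} (ht : m₀ ≤ t) :
    wF s z m₀ (t+1) = wF s z m₀ t + rect s (stepF z t) := by
  rw [wF, wF, Finset.sum_Ico_succ_top ht, add_assoc]

include hs hu hnb in
lemma rect_bond {t : ℕ} (ht : m₀ ≤ t) (htn : t < n)
    (hPB : 0 < PB (P t) (P (t+1)) (stepF z t)) :
    0 < PB (QF s z P m₀ n t) (QF s z P m₀ n (t+1)) (rect s (stepF z t)) := by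
  have he := hu t htn
  have hre : U (rect s (stepF z t)) := U_rect he
  have h1 : facingGlue (QF s z P m₀ n t) (0,0) (rect s (stepF z t))
      = facingGlue (P t) (0,0) (stepF z t) := by
    rw [QF]
    rw [facing_comp _ _ _ _ hre]
    rw [CL hs hu ht htn]
  have h2 : facingGlue (QF s z P m₀ n (t+1)) (rect s (stepF z t)) (0,0)
      = facingGlue (P (t+1)) (stepF z t) (0,0) := by
    have hsh : ∀ (pl : Placement) (d : ℤ × ℤ), facingGlue pl d (0,0) = facingGlue pl (0,0) (-d) := by
      intro pl d
      have h := facingGlue_shift pl (0,0) (-d) d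
      have e1 : ((0,0) : ℤ × ℤ) + d = d := by rw [Prod.mk_zero_zero, zero_add]
      have e2 : -d + d = ((0,0) : ℤ × ℤ) := by rw [Prod.mk_zero_zero, neg_add_cancel]
      rw [e1, e2] at h
      exact h
    rw [hsh, QF, facing_comp _ _ _ _ (U_neg hre), onPoint_neg, CL' hs hu hnb ht htn, hsh]
  rw [PB, h1, h2]
  rwa [PB] at hPB

end PumpCore

section Helpers

lemma mono_of_steps {X : ℕ → ℤ} {a : ℕ} (h : ∀ t, a ≤ t → X t ≤ X (t+1)) :
    ∀ t t', a ≤ t → t ≤ t' → X t ≤ X t' := by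
  intro t t' hat htt'
  induction t', htt' using Nat.le_induction with
  | base => exact le_refl _
  | succ t' ht' ih => exact le_trans ih (h t' (by omega))

lemma nsmul_unit_ne_zero {v : ℤ × ℤ} (hv : U v) {k : ℕ} (hk : 0 < k) : k • v ≠ (0,0) := by
  intro h
  have h1 : (k • v).1 = (k : ℤ) * v.1 := by rw [Prod.smul_fst, nsmul_eq_mul]
  have h2 : (k • v).2 = (k : ℤ) * v.2 := by rw [Prod.smul_snd, nsmul_eq_mul]
  rcases hv with h' | h' | h' | h' <;> subst h' <;> rw [h] at h1 h2 <;>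
    simp at h1 h2 <;> omega

end Helpers

lemma main (Sys : RTAS) (hτ : Sys.temp = 1)
    (h0 : ((0, 0) : ℤ × ℤ) ∈ adom Sys.seed)
    (c : ℕ) (hc : IsLeast {n : ℕ | adom Sys.seed ⊆ box n (0, 0)} c)
    (α : Assembly) (hα : Producible Sys α)
    (p : ℤ × ℤ) (hp : p ∈ adom α)
    (hout : p ∉ box (4 * Sys.tiles.card + c + 1) (0, 0)) :
    ∀ N : ℕ, ∃ β, Producible Sys β ∧ (adom β).Finite ∧ N ≤ (adom β).ncard := by
  classical
  intro N
  set K := Sys.tiles.card with hKdef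
  obtain ⟨f, hf0, hfs, hfl⟩ := hα
  obtain ⟨plp, hplp⟩ : ∃ pl, α p = some pl := by
    cases h : α p
    · exact absurd h hp
    · exact ⟨_, rfl⟩
  obtain ⟨n₀, hn₀⟩ := (hfl p plp).mp hplp
  set β := f n₀ with hβdef
  have hstβ : Stable β 1 := chain_stable hτ hf0 hfs n₀
  have hseedβ : ∀ q pl', Sys.seed q = some pl' → β q = some pl' := by
    intro q pl' h
    exact chain_mono hfs (Nat.zero_le n₀) (by rw [hf0]; exact h)
  have htilesβ : ∀ q pl', β q = some pl' → pl'.1 ∈ Sys.tiles :=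
    fun q pl' h => chain_tiles hf0 hfs n₀ h
  have hbox : adom Sys.seed ⊆ box c (0,0) := hc.1
  have h00 : β ((0,0) : ℤ × ℤ) ≠ none := by
    obtain ⟨pl0, hpl0⟩ : ∃ pl0, Sys.seed (0,0) = some pl0 := by
      cases h : Sys.seed (0,0)
      · exact absurd h h0
      · exact ⟨_, rfl⟩
    rw [hseedβ _ _ hpl0]
    exact Option.some_ne_none _
  have hpβ : β p ≠ none := by
    rw [hn₀]
    exact Option.some_ne_none _
  have hconn : Relation.ReflTransGen (BondAdj β) (0,0) p := stable_conn hstβ h00 hpβ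
  obtain ⟨n, z, hz0, hzn, hzstep, hzinj⟩ := exists_min_walk hconn
  -- choose the direction functional
  obtain ⟨s, hsU, hsp⟩ : ∃ s : ℤ × ℤ, U s ∧ (c : ℤ) + 4 * K + 2 ≤ xi s p := by
    simp only [box, Set.mem_setOf_eq, sub_zero, not_and_or, not_le] at hout
    obtain ⟨p1, p2⟩ := p
    rcases hout with h | h
    · rcases le_or_gt 0 p1 with h' | h'
      · refine ⟨(1, 0), by unfold U; norm_num, ?_⟩
        simp only [xi]
        have : |p1| = p1 := abs_of_nonneg h'
        push_cast at h ⊢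
        omega
      · refine ⟨(-1, 0), by unfold U; norm_num, ?_⟩
        simp only [xi]
        have : |p1| = -p1 := abs_of_neg h'
        push_cast at h ⊢
        omega
    · rcases le_or_gt 0 p2 with h' | h'
      · refine ⟨(0, 1), by unfold U; norm_num, ?_⟩
        simp only [xi]
        have : |p2| = p2 := abs_of_nonneg h'
        push_cast at h ⊢
        omega
      · refine ⟨(0, -1), by unfold U; norm_num, ?_⟩
        simp only [xi]
        have : |p2| = -p2 := abs_of_neg h'
        push_cast at h ⊢
        omega
  -- placements along the walk
  have hzdom : ∀ t, t ≤ n → β (z t) ≠ none := by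
    intro t ht
    rcases eq_or_lt_of_le ht with h | h
    · rw [h, hzn]; exact hpβ
    · obtain ⟨a, b, ha, hb⟩ := bondAdj_some (hzstep t h)
      rw [ha]; exact Option.some_ne_none _
  set P : ℕ → Placement := fun t => (β (z t)).getD default with hPdef
  have hPt : ∀ t, t ≤ n → β (z t) = some (P t) := by
    intro t ht
    have h' := hzdom t ht
    simp only [hPdef]
    obtain ⟨v, hv⟩ : ∃ v, β (z t) = some v := by
      cases h : β (z t)
      · exact absurd h h'
      · exact ⟨_, rfl⟩
    rw [hv]
    rfl
  have hunit : ∀ t, t < n → U (stepF z t) := by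
    intro t ht
    have hb := hzstep t ht
    unfold BondAdj at hb
    rw [bondStrength_eq (hPt t (by omega)) (hPt (t+1) (by omega))] at hb
    exact PB_pos_unit hb
  have hPB : ∀ t, t < n → 0 < PB (P t) (P (t+1)) (stepF z t) := by
    intro t ht
    have hb := hzstep t ht
    unfold BondAdj at hb
    rw [bondStrength_eq (hPt t (by omega)) (hPt (t+1) (by omega))] at hb
    exact hb
  have hnb : ∀ t, t + 2 ≤ n → z (t+2) ≠ z t := by
    intro t h2 heq
    have := hzinj (t+2) (by omega) t (by omega) heq
    omega
  -- the height function along the walk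
  set g : ℕ → ℤ := fun t => xi s (z t) with hgdef
  have hg0 : g 0 = 0 := by
    show xi s (z 0) = 0
    rw [hz0]
    rcases hsU with h | h | h | h <;> subst h <;> decide
  have hgn : (c:ℤ) + 4 * K + 2 ≤ g n := by
    show _ ≤ xi s (z n)
    rw [hzn]; exact hsp
  have hgstep : ∀ t, t < n → g (t+1) - g t = xi s (stepF z t) := by
    intro t ht
    show xi s (z (t+1)) - xi s (z t) = xi s (z (t+1) - z t)
    rw [xi_sub]
  -- the first crossing of level c+1
  have hcex : ∃ t, t ≤ n ∧ (c:ℤ) + 1 ≤ g t := ⟨n, le_refl n, by omega⟩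
  set M := Nat.find hcex with hMdef
  have hMspec := Nat.find_spec hcex
  rw [← hMdef] at hMspec
  obtain ⟨hMn, hgM⟩ := hMspec
  have hMmin : ∀ t, t < M → g t ≤ c := by
    intro t ht
    have h1 := Nat.find_min hcex (hMdef ▸ ht)
    push_neg at h1
    have htn : t ≤ n := by omega
    have := h1 htn
    omega
  have hM1 : 1 ≤ M := by
    by_contra h
    have hM0 : M = 0 := by omega
    rw [hM0] at hgM
    rw [hg0] at hgM
    omega
  obtain ⟨m₀, hm₀M⟩ : ∃ m₀, M = m₀ + 1 := ⟨M - 1, by omega⟩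
  have hm₀n : m₀ < n := by omega
  have hgm₀ : g m₀ ≤ c := hMmin m₀ (by omega)
  have hstepm₀ : xi s (stepF z m₀) = g (m₀+1) - g m₀ := (hgstep m₀ hm₀n).symm
  have hgm₀1 : g (m₀+1) = c + 1 ∧ g m₀ = c := by
    have h1 : (c:ℤ) + 1 ≤ g (m₀+1) := by rw [← hm₀M]; exact hgM
    rcases xi_cases hsU (hunit m₀ hm₀n) with h | h | h <;> omega
  have hem : stepF z m₀ = s := by
    apply eq_s_of_xi_one hsU (hunit m₀ hm₀n)
    omega
  -- the rectified height function
  set G : ℕ → ℤ := fun t => xi s (wF s z m₀ t) with hGdef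
  have hGm₀ : G m₀ = c := by
    show xi s (wF s z m₀ m₀) = c
    rw [wF_m₀]
    exact hgm₀1.2
  have hGstep : ∀ t, m₀ ≤ t → t < n → G (t+1) = G t + |xi s (stepF z t)| := by
    intro t h1 h2
    show xi s (wF s z m₀ (t+1)) = xi s (wF s z m₀ t) + _
    rw [wF_succ h1, xi_add, xi_rect hsU (hunit t h2)]
  have hGstep01 : ∀ t, m₀ ≤ t → t < n → G t ≤ G (t+1) ∧ G (t+1) ≤ G t + 1 := by
    intro t h1 h2
    rw [hGstep t h1 h2]
    rcases xi_cases hsU (hunit t h2) with h | h | h <;> rw [h] <;> norm_num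
  have hGmono : ∀ t', t' ≤ n → ∀ t, m₀ ≤ t → t ≤ t' → G t ≤ G t' := by
    intro t'
    induction t' with
    | zero =>
      intro _ t h1 h2
      have ht : t = 0 := by omega
      rw [ht]
    | succ t' ih =>
      intro hn' t h1 h2
      rcases Nat.eq_or_lt_of_le h2 with he | hlt
      · rw [he]
      · exact le_trans (ih (by omega) t h1 (by omega))
          (hGstep01 t' (by omega) (by omega)).1
  have hGtel : ∀ t', m₀ ≤ t' → t' ≤ n → g t' - g m₀ ≤ G t' - G m₀ := by
    intro t' h1
    induction t', h1 using Nat.le_induction with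
    | base => intro _; omega
    | succ t' ht' ih =>
      intro h2
      have hi := ih (by omega)
      have hgs := hgstep t' (by omega)
      have hGs := hGstep t' (by omega) (by omega)
      have habs : xi s (stepF z t') ≤ |xi s (stepF z t')| := le_abs_self _
      omega
  have hGn : (c:ℤ) + 4*K + 2 ≤ G n := by
    have h1 := hGtel n (by omega) (le_refl n)
    have h2 := hgm₀1.2
    omega
  -- crossing indices
  have hτex : ∀ i : ℕ, ∃ t, m₀ ≤ t ∧ t ≤ n ∧ (c:ℤ) + (min i (4*K)) + 1 ≤ G t := by
    intro i
    refine ⟨n, by omega, le_refl n, ?_⟩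
    have hle : ((min i (4*K) : ℕ) : ℤ) ≤ ((4*K : ℕ) : ℤ) := by
      exact_mod_cast min_le_right i (4*K)
    push_cast at hle ⊢
    omega
  set τ : ℕ → ℕ := fun i => Nat.find (hτex i) with hτdef
  have hτspec : ∀ i, m₀ ≤ τ i ∧ τ i ≤ n ∧ (c:ℤ) + (min i (4*K)) + 1 ≤ G (τ i) := by
    intro i
    simp only [hτdef]
    exact Nat.find_spec (hτex i)
  have hτmin : ∀ i t, t < τ i → m₀ ≤ t → t ≤ n → G t ≤ (c:ℤ) + min i (4*K) := by
    intro i t ht h1 h2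
    have hm := Nat.find_min (hτex i) (by simpa [hτdef] using ht)
    push_neg at hm
    have := hm h1 h2
    omega
  have hτfacts : ∀ i, i ≤ 4*K → G (τ i) = c + i + 1 ∧ m₀ + 1 ≤ τ i ∧
      rect s (stepF z (τ i - 1)) = s := by
    intro i hi
    have hmin : min i (4*K) = i := min_eq_left hi
    obtain ⟨h1, h2, h3⟩ := hτspec i
    rw [hmin] at h3
    have hne : m₀ + 1 ≤ τ i := by
      rcases Nat.eq_or_lt_of_le h1 with he | hlt
      · exfalso
        rw [← he] at h3
        rw [hGm₀] at h3
        have : (0:ℤ) ≤ i := by positivity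
        omega
      · omega
    have ht' : τ i - 1 < τ i := by omega
    have ht'm : m₀ ≤ τ i - 1 := by omega
    have ht'n : τ i - 1 < n := by omega
    have hGt' : G (τ i - 1) ≤ (c:ℤ) + i := by
      have := hτmin i (τ i - 1) ht' ht'm (by omega)
      rw [hmin] at this
      exact this
    have hsucc : τ i - 1 + 1 = τ i := by omega
    have hstep01 := hGstep01 (τ i - 1) ht'm ht'n
    rw [hsucc] at hstep01
    have hGval : G (τ i) = c + i + 1 := by omega
    have hGt'val : G (τ i - 1) = c + i := by omega
    have habs : |xi s (stepF z (τ i - 1))| = 1 := by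
      have := hGstep (τ i - 1) ht'm ht'n
      rw [hsucc] at this
      omega
    refine ⟨hGval, hne, ?_⟩
    apply eq_s_of_xi_one hsU (U_rect (hunit _ ht'n))
    rw [xi_rect hsU (hunit _ ht'n)]
    exact habs
  have hτlt : ∀ i j, i ≤ 4*K → j ≤ 4*K → i < j → τ i < τ j := by
    intro i j hi hj hij
    by_contra hcon
    push_neg at hcon
    have h1 := (hτfacts i hi).1
    have h2 := (hτfacts j hj).1
    have := hGmono (τ i) (hτspec i).2.1 (τ j) (hτspec j).1 hcon
    omega
  -- pigeonhole on the crossing tiles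
  obtain ⟨i₀, hi₀, j₀, hj₀, hij₀, hQQ₀⟩ :=
    Finset.exists_ne_map_eq_of_card_lt_of_maps_to
      (s := Finset.range (4*K+1)) (t := Sys.tiles ×ˢ (Finset.univ : Finset Reflection))
      (f := fun i => QF s z P m₀ n (τ i)) (by
        rw [Finset.card_range, Finset.card_product]
        have : (Finset.univ : Finset Reflection).card = 4 := by decide
        rw [this]
        omega)
      (by
        intro i hi
        rw [Finset.mem_coe, Finset.mem_product]
        constructor
        · have hmem : (P (τ i)).1 ∈ Sys.tiles := htilesβ _ _ (hPt (τ i) (hτspec i).2.1)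
          exact hmem
        · exact Finset.mem_univ _)
  rw [Finset.mem_range] at hi₀ hj₀
  obtain ⟨i, j, hi, hj, hij, hQQ⟩ :
      ∃ i j, i ≤ 4*K ∧ j ≤ 4*K ∧ i < j ∧ QF s z P m₀ n (τ i) = QF s z P m₀ n (τ j) := by
    rcases lt_trichotomy i₀ j₀ with h | h | h
    · exact ⟨i₀, j₀, by omega, by omega, h, hQQ₀⟩
    · exact absurd h hij₀
    · exact ⟨j₀, i₀, by omega, by omega, h, hQQ₀.symm⟩
  set t1 := τ i with ht1def
  set t2 := τ j with ht2def
  have ht12 : t1 < t2 := hτlt i j hi hj hij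
  set L := t2 - t1 with hLdef
  have hL1 : 1 ≤ L := by omega
  set d := wF s z m₀ t2 - wF s z m₀ t1 with hddef
  have hxid : xi s d = (j : ℤ) - i := by
    show xi s (wF s z m₀ t2 - wF s z m₀ t1) = _
    rw [xi_sub]
    have h1 := (hτfacts i hi).1
    have h2 := (hτfacts j hj).1
    rw [← ht1def] at h1
    rw [← ht2def] at h2
    show G t2 - G t1 = _
    omega
  have hxid1 : 1 ≤ xi s d := by
    rw [hxid]
    have : (i:ℤ) < j := by exact_mod_cast hij
    omega
  have hentry2 : rect s (stepF z (t2 - 1)) = s := (hτfacts j hj).2.2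
  have hm₀t1 : m₀ + 1 ≤ t1 := (hτfacts i hi).2.1
  have ht1n : t1 ≤ n := (hτspec i).2.1
  have ht2n : t2 ≤ n := (hτspec j).2.1
  -- index map for the pumped walk
  set σ : ℕ → ℕ := fun t => if t < t1 then t else t1 + (t - t1) % L with hσdef
  set pos : ℕ → ℤ × ℤ := fun t => if t ≤ m₀ then z t
      else if t ≤ t1 then wF s z m₀ t
      else wF s z m₀ (t1 + (t - t1) % L) + ((t - t1) / L) • d with hposdef
  set pl : ℕ → Placement := fun t => if t ≤ m₀ then P t
      else if t ≤ t1 then QF s z P m₀ n t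
      else QF s z P m₀ n (t1 + (t - t1) % L) with hpldef
  have hσlt : ∀ t, t < t1 → σ t = t := by
    intro t ht; simp only [hσdef]; rw [if_pos ht]
  have hσge : ∀ t, t1 ≤ t → σ t = t1 + (t - t1) % L := by
    intro t ht; simp only [hσdef]; rw [if_neg (by omega)]
  have hmodlt : ∀ t : ℕ, (t - t1) % L < L := fun t => Nat.mod_lt _ (by omega)
  have hmodsucc : ∀ t, t1 ≤ t →
      ((t - t1) % L + 1 < L →
        (t + 1 - t1) % L = (t - t1) % L + 1 ∧ (t + 1 - t1) / L = (t - t1) / L) ∧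
      ((t - t1) % L + 1 = L →
        (t + 1 - t1) % L = 0 ∧ (t + 1 - t1) / L = (t - t1) / L + 1) := by
    intro t ht
    have hdm := Nat.div_add_mod (t - t1) L
    constructor
    · intro hb
      have h1 : t + 1 - t1 = L * ((t - t1)/L) + ((t - t1) % L + 1) := by omega
      rw [h1, Nat.mul_add_mod, Nat.mod_eq_of_lt hb, Nat.mul_add_div (by omega),
        Nat.div_eq_of_lt hb]
      exact ⟨rfl, by omega⟩
    · intro hb
      have h2 : t + 1 - t1 = L * ((t - t1)/L + 1) := by
        have h3 : t + 1 - t1 = L * ((t - t1)/L) + L := by omega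
        rw [h3]; ring
      rw [h2, Nat.mul_mod_right, Nat.mul_div_cancel_left _ (show 0 < L by omega)]
      exact ⟨rfl, rfl⟩
  have hpos_pre : ∀ t, t ≤ m₀ → pos t = z t := by
    intro t ht; simp only [hposdef]; rw [if_pos ht]
  have hpos_w : ∀ t, m₀ ≤ t → t ≤ t1 → pos t = wF s z m₀ t := by
    intro t h1 h2
    by_cases h : t ≤ m₀
    · have he : t = m₀ := by omega
      subst he
      simp only [hposdef]
      rw [if_pos h, wF_m₀]
    · simp only [hposdef]; rw [if_neg h, if_pos h2]
  have hpos_pump : ∀ t, t1 ≤ t →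
      pos t = wF s z m₀ (t1 + (t - t1) % L) + ((t - t1) / L) • d := by
    intro t ht
    rcases Nat.eq_or_lt_of_le ht with he | hlt
    · rw [← he, hpos_w t1 (by omega) (le_refl t1), Nat.sub_self]
      norm_num
    · simp only [hposdef]; rw [if_neg (by omega), if_neg (by omega)]
  have hpl_pre : ∀ t, t ≤ m₀ → pl t = P t := by
    intro t ht; simp only [hpldef]; rw [if_pos ht]
  have hpl_w : ∀ t, m₀ ≤ t → t ≤ t1 → pl t = QF s z P m₀ n t := by
    intro t h1 h2
    by_cases h : t ≤ m₀
    · have he : t = m₀ := by omega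
      subst he
      simp only [hpldef]
      rw [if_pos h, QF_m₀ hsU hm₀n hem]
    · simp only [hpldef]; rw [if_neg h, if_pos h2]
  have hpl_pump : ∀ t, t1 ≤ t → pl t = QF s z P m₀ n (t1 + (t - t1) % L) := by
    intro t ht
    rcases Nat.eq_or_lt_of_le ht with he | hlt
    · rw [← he, hpl_w t1 (by omega) (le_refl t1), Nat.sub_self]
      norm_num
    · simp only [hpldef]; rw [if_neg (by omega), if_neg (by omega)]
  -- structure of each pumped step
  have hstepform : ∀ t, m₀ ≤ t → pos (t+1) - pos t = rect s (stepF z (σ t)) ∧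
      pl t = QF s z P m₀ n (σ t) ∧ pl (t+1) = QF s z P m₀ n (σ t + 1) ∧
      m₀ ≤ σ t ∧ σ t < n := by
    intro t htm
    by_cases hA : t < t1
    · have hσt : σ t = t := hσlt t hA
      have hd : pos (t+1) - pos t = rect s (stepF z (σ t)) := by
        rw [hpos_w (t+1) (by omega) (by omega), hpos_w t htm (by omega), wF_succ htm, hσt]
        exact add_sub_cancel_left _ _
      refine ⟨hd, ?_, ?_, by omega, by omega⟩
      · rw [hpl_w t htm (by omega), hσt]
      · rw [hpl_w (t+1) (by omega) (by omega), hσt]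
    · have ht : t1 ≤ t := by omega
      have hσt : σ t = t1 + (t - t1) % L := hσge t ht
      have hblt : (t - t1) % L < L := hmodlt t
      have hσm : m₀ ≤ σ t := by omega
      have hσn : σ t < n := by omega
      by_cases hbL : (t - t1) % L + 1 < L
      · obtain ⟨hm1, hm2⟩ := (hmodsucc t ht).1 hbL
        have hd : pos (t+1) - pos t = rect s (stepF z (σ t)) := by
          rw [hpos_pump (t+1) (by omega), hpos_pump t ht, hm1, hm2]
          have h5 : t1 + ((t - t1) % L + 1) = (t1 + (t - t1) % L) + 1 := by omega
          rw [h5, wF_succ (show m₀ ≤ t1 + (t - t1) % L by omega), hσt]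
          abel
        refine ⟨hd, ?_, ?_, hσm, hσn⟩
        · rw [hpl_pump t ht, hσt]
        · rw [hpl_pump (t+1) (by omega), hm1]
          have h5 : t1 + ((t - t1) % L + 1) = σ t + 1 := by omega
          rw [h5]
      · have hbL' : (t - t1) % L + 1 = L := by omega
        obtain ⟨hm1, hm2⟩ := (hmodsucc t ht).2 hbL'
        have hu2 : σ t + 1 = t2 := by omega
        have h5 : wF s z m₀ t2 = wF s z m₀ (σ t) + rect s (stepF z (σ t)) := by
          rw [← hu2, wF_succ (show m₀ ≤ σ t by omega)]
        have hd : pos (t+1) - pos t = rect s (stepF z (σ t)) := by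
          rw [hpos_pump (t+1) (by omega), hpos_pump t ht, hm1, hm2, succ_nsmul, ← hσt]
          rw [Nat.add_zero, hddef, h5]
          abel
        refine ⟨hd, ?_, ?_, hσm, hσn⟩
        · rw [hpl_pump t ht, hσt]
        · rw [hpl_pump (t+1) (by omega), hm1, Nat.add_zero, hQQ, ← hu2]
  -- bond hypothesis for the builder
  have hbond : ∀ t, 0 < PB (pl t) (pl (t+1)) (pos (t+1) - pos t) := by
    intro t
    by_cases ht : t + 1 ≤ m₀
    · rw [hpl_pre t (by omega), hpl_pre (t+1) ht, hpos_pre t (by omega), hpos_pre (t+1) ht]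
      exact hPB t (by omega)
    · have htm : m₀ ≤ t := by omega
      obtain ⟨hd, hp1, hp2, hσm, hσn⟩ := hstepform t htm
      rw [hd, hp1, hp2]
      exact rect_bond hsU hunit hnb hσm hσn (hPB (σ t) hσn)
  -- tile types
  have htile : ∀ t, (pl t).1 ∈ Sys.tiles := by
    intro t
    by_cases ht : t ≤ m₀
    · rw [hpl_pre t ht]
      exact htilesβ _ _ (hPt t (by omega))
    · have htm : m₀ ≤ t := by omega
      obtain ⟨_, hp1, _, _, hσn⟩ := hstepform t htm
      rw [hp1]
      have hmem : (P (σ t)).1 ∈ Sys.tiles := htilesβ _ _ (hPt (σ t) (by omega))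
      exact hmem
  -- heights of pumped positions
  have hGm₁ : G (m₀ + 1) = c + 1 := by
    rw [hGstep m₀ (le_refl m₀) hm₀n, hGm₀, hem, xi_self hsU, abs_one]
  have hxpos : ∀ t, m₀ < t → (c:ℤ) + 1 ≤ xi s (pos t) := by
    intro t htm
    by_cases ht : t ≤ t1
    · rw [hpos_w t (by omega) ht]
      show (c:ℤ) + 1 ≤ G t
      have := hGmono t (by omega) (m₀+1) (by omega) (by omega)
      omega
    · have ht' : t1 ≤ t := by omega
      rw [hpos_pump t ht', xi_add, xi_nsmul]
      have hGu : (c:ℤ) + 1 ≤ G (t1 + (t - t1) % L) := by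
        have hb := hmodlt t
        have := hGmono (t1 + (t - t1) % L) (by omega) (m₀+1) (by omega) (by omega)
        omega
      have hGu' : (c:ℤ) + 1 ≤ xi s (wF s z m₀ (t1 + (t - t1) % L)) := hGu
      have hpos2 : 0 ≤ ((t - t1)/L : ℕ) * xi s d :=
        mul_nonneg (by positivity) (by omega)
      linarith
  -- consistency with the seed
  have hseedc : ∀ t pl', Sys.seed (pos t) = some pl' → pl' = pl t := by
    intro t pl' hsd
    by_cases ht : t ≤ m₀
    · rw [hpos_pre t ht] at hsd
      have h1 := hseedβ _ _ hsd
      rw [hPt t (by omega)] at h1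
      have h2 := Option.some.inj h1
      rw [hpl_pre t ht, ← h2]
    · exfalso
      have hmem : pos t ∈ adom Sys.seed := by
        show Sys.seed (pos t) ≠ none
        rw [hsd]
        exact Option.some_ne_none _
      have hle := xi_box hsU (hbox hmem)
      have := hxpos t (by omega)
      omega
  -- monotonicity of the height along the pumped walk
  have hmono2 : ∀ t t', m₀ ≤ t → t ≤ t' → xi s (pos t) ≤ xi s (pos t') := by
    apply mono_of_steps
    intro t htm
    obtain ⟨hd, _, _, hσm, hσn⟩ := hstepform t htm
    have h5 : pos (t+1) = pos t + rect s (stepF z (σ t)) := by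
      rw [← hd]; abel
    rw [h5, xi_add, xi_rect hsU (hunit _ hσn)]
    have := abs_nonneg (xi s (stepF z (σ t)))
    omega
  -- consecutive flat steps have consecutive indices
  have hσsucc : ∀ t, m₀ ≤ t → xi s (stepF z (σ t)) = 0 → xi s (stepF z (σ (t+1))) = 0 →
      σ (t+1) = σ t + 1 := by
    intro t htm h1 h2
    by_cases hA : t + 1 < t1
    · rw [hσlt (t+1) hA, hσlt t (by omega)]
    · by_cases hB : t + 1 = t1
      · rw [hσge (t+1) (by omega), hσlt t (by omega)]
        have hz0' : t + 1 - t1 = 0 := by omega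
        rw [hz0', Nat.zero_mod]
        omega
      · have ht : t1 ≤ t := by omega
        have hb := hmodlt t
        by_cases hbL : (t - t1) % L + 1 < L
        · obtain ⟨hm1, _⟩ := (hmodsucc t ht).1 hbL
          rw [hσge (t+1) (by omega), hσge t ht, hm1]
          omega
        · exfalso
          have hσt : σ t = t2 - 1 := by rw [hσge t ht]; omega
          have h9 : |xi s (stepF z (t2 - 1))| = 1 := by
            rw [← xi_rect hsU (hunit _ (by omega)), hentry2, xi_self hsU]
          rw [hσt] at h1
          rw [h1] at h9
          norm_num at h9
  -- injectivity of pumped positions beyond the prefix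
  have hinj : ∀ t t', m₀ ≤ t → t < t' → pos t = pos t' → False := by
    intro t t' htm htt' heq
    have hflat : ∀ u, t ≤ u → u < t' → xi s (stepF z (σ u)) = 0 := by
      intro u h1 h2
      have e2 : xi s (pos t) ≤ xi s (pos u) := hmono2 t u htm h1
      have e3 : xi s (pos (u+1)) ≤ xi s (pos t') := hmono2 (u+1) t' (by omega) (by omega)
      obtain ⟨hd, _, _, hσm, hσn⟩ := hstepform u (by omega)
      have h6 : pos (u+1) = pos u + rect s (stepF z (σ u)) := by rw [← hd]; abel
      have h5 : xi s (pos (u+1)) = xi s (pos u) + |xi s (stepF z (σ u))| := by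
        rw [h6, xi_add, xi_rect hsU (hunit _ hσn)]
      have heq' : xi s (pos t) = xi s (pos t') := by rw [heq]
      have habs := abs_nonneg (xi s (stepF z (σ u)))
      have h7 : |xi s (stepF z (σ u))| = 0 := by omega
      exact abs_eq_zero.mp h7
    have hstepeq : ∀ u, t ≤ u → u < t' → stepF z (σ u) = stepF z (σ t) := by
      intro u h1
      induction u, h1 using Nat.le_induction with
      | base => intro _; rfl
      | succ u hu ih =>
        intro h2
        have hz1 := hflat u hu (by omega)
        have hz2 := hflat (u+1) (by omega) h2
        have hsucc := hσsucc u (by omega) hz1 hz2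
        obtain ⟨_, _, _, _, hσn'⟩ := hstepform (u+1) (by omega)
        rw [hsucc] at hσn' hz2
        rw [hsucc]
        rw [step_perp_eq hsU hunit hnb hσn' hz1 hz2]
        exact ih (by omega)
    have hdisp : ∀ k, t + k ≤ t' → pos (t + k) - pos t = k • rect s (stepF z (σ t)) := by
      intro k
      induction k with
      | zero => intro _; simp
      | succ k ih =>
        intro hk
        have h1 := ih (by omega)
        obtain ⟨hd, _, _, _, _⟩ := hstepform (t + k) (by omega)
        have h6 : pos (t+k+1) = pos (t+k) + rect s (stepF z (σ (t+k))) := by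
          rw [← hd]; abel
        have h7 : stepF z (σ (t + k)) = stepF z (σ t) := hstepeq (t+k) (by omega) (by omega)
        show pos (t + (k+1)) - pos t = _
        have h8 : t + (k + 1) = (t + k) + 1 := by omega
        rw [h8, h6, h7, succ_nsmul, ← h1]
        abel
    have hk := hdisp (t' - t) (by omega)
    have h9 : t + (t' - t) = t' := by omega
    rw [h9] at hk
    have h10 : (t' - t) • rect s (stepF z (σ t)) = ((0:ℤ),(0:ℤ)) := by
      rw [← hk, ← heq, Prod.mk_zero_zero]
      exact sub_self _
    obtain ⟨_, _, _, _, hσn⟩ := hstepform t htm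
    exact nsmul_unit_ne_zero (U_rect (hunit _ hσn)) (show 0 < t' - t by omega) h10
  -- placement consistency
  have hcons : ∀ t t', pos t = pos t' → pl t = pl t' := by
    have hpre_le : ∀ t, t ≤ m₀ → xi s (pos t) ≤ c := by
      intro t ht
      rw [hpos_pre t ht]
      exact hMmin t (by omega)
    intro t t' heq
    by_cases h1 : t ≤ m₀ <;> by_cases h2 : t' ≤ m₀
    · rw [hpos_pre t h1, hpos_pre t' h2] at heq
      have := hzinj t (by omega) t' (by omega) heq
      rw [this]
    · exfalso
      have e1 := hxpos t' (by omega)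
      have e2 := hpre_le t h1
      rw [heq] at e2
      omega
    · exfalso
      have e1 := hxpos t (by omega)
      have e2 := hpre_le t' h2
      rw [← heq] at e2
      omega
    · rcases lt_trichotomy t t' with h | h | h
      · exact absurd heq (fun he => hinj t t' (by omega) h he)
      · rw [h]
      · exact absurd heq.symm (fun he => hinj t' t (by omega) h he)
  -- build the assembly and count
  have hin : Sys.seed (pos 0) ≠ none := by
    rw [hpos_pre 0 (by omega), hz0]
    exact h0
  obtain ⟨γ, hprod, hfin, hmem⟩ := build Sys hτ pos pl hin hbond htile hseedc hcons (m₀ + 1 + N)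
  refine ⟨γ, hprod, hfin, ?_⟩
  set F := (Finset.Icc (m₀+1) (m₀+N)).image pos with hFdef
  have hFcard : F.card = N := by
    rw [hFdef, Finset.card_image_of_injOn, Nat.card_Icc]
    · omega
    · intro a ha b hb hab
      simp only [Finset.coe_Icc, Set.mem_Icc] at ha hb
      rcases lt_trichotomy a b with h | h | h
      · exact absurd hab (fun he => hinj a b (by omega) h he)
      · exact h
      · exact absurd hab.symm (fun he => hinj b a (by omega) h he)
  have hFsub : (F : Set (ℤ × ℤ)) ⊆ adom γ := by
    intro q hq
    simp only [hFdef, Finset.coe_image, Set.mem_image, Finset.mem_coe, Finset.mem_Icc] at hq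
    obtain ⟨u, hu, rfl⟩ := hq
    exact hmem u (by omega)
  calc N = F.card := hFcard.symm
    _ = (F : Set (ℤ × ℤ)).ncard := (Set.ncard_coe_finset F).symm
    _ ≤ (adom γ).ncard := Set.ncard_le_ncard hFsub hfin




end RTAMPump

/-- **pumping.** If a temperature-1 RTAM system whose seed lies within the
box of least radius `c` about the origin has a producible assembly with a tile outside the
box of radius `4|T| + c + 1`, then it has producible assemblies of arbitrarily large
finite size. -/
theorem rtam_temp1_pumping
    (Sys : RTAS) (hτ : Sys.temp = 1)
    (h0 : ((0, 0) : ℤ × ℤ) ∈ adom Sys.seed)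
    (c : ℕ) (hc : IsLeast {n : ℕ | adom Sys.seed ⊆ box n (0, 0)} c)
    (α : Assembly) (hα : Producible Sys α)
    (p : ℤ × ℤ) (hp : p ∈ adom α)
    (hout : p ∉ box (4 * Sys.tiles.card + c + 1) (0, 0)) :
    ∀ N : ℕ, ∃ β, Producible Sys β ∧ (adom β).Finite ∧ N ≤ (adom β).ncard :=
  RTAMPump.main Sys hτ h0 c hc α hα p hp hout
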